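/- arXiv:1512.05129 — 3 statements merged into one kernel-verified Lean document; each statement's English description precedes it below -/
import Mathlib

section
/- Let n ≥ 1 and let u : ℝⁿ → ℝ be a C² function whose gradient satisfies |∇u(x)| ≤ 1 − ε for all x ∈ ℝⁿ, for some ε > 0 (in particular |∇u(x)| < 1, so the graph of u is spacelike and the gradient is bounded away from 1). Then u satisfies the f-maximal graph equation div(∇u/√(1 − |∇u|²))(x) = ⟨x, ∇u(x)⟩/√(1 − |∇u(x)|²) at every x ∈ ℝⁿ if and only if u is constant. -/
/-!
Multiplying the `f`-maximal equation by the weight `u e^{-|x|²/2}` shows that the field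
`V = u e^{-|x|²/2} ∇u / √(1 - |∇u|²)` has divergence `e^{-|x|²/2} |∇u|² / √(1 - |∇u|²) ≥ 0`.
Because `|∇u| ≤ 1 - ε`, the function `u` grows at most linearly and `|∇u| / √(1 - |∇u|²)` is
bounded, so the Gaussian factor makes the flux of `V` through the boundary of the cube `[-R, R]ⁿ`
tend to `0`. By the divergence theorem the integrals of the nonnegative continuous function
`div V` over these cubes tend to `0`, hence `div V ≡ 0` and `∇u ≡ 0`.
-/

open scoped RealInnerProductSpace

/-- Euclidean divergence of a vector field on `ℝⁿ`. -/
noncomputable def ediv {n : ℕ} (F : EuclideanSpace ℝ (Fin n) → EuclideanSpace ℝ (Fin n))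
    (x : EuclideanSpace ℝ (Fin n)) : ℝ :=
  ∑ i, fderiv ℝ (fun y => F y i) x (EuclideanSpace.single i 1)

open MeasureTheory Filter Set Real Topology

theorem one_sub_norm_sq_pos {E : Type*} [SeminormedAddGroup E] {v : E} (hv : ‖v‖ < 1) :
    0 < 1 - ‖v‖ ^ 2 :=
  sub_pos.2 (pow_lt_one₀ (norm_nonneg v) hv two_ne_zero)

section InnerProductSpace
variable {F : Type*} [NormedAddCommGroup F] [InnerProductSpace ℝ F]

theorem hasFDerivAt_exp_neg_norm_sq_div_two (x : F) :
    HasFDerivAt (fun y : F => exp (-‖y‖ ^ 2 / 2)) (-exp (-‖x‖ ^ 2 / 2) • innerSL ℝ x) x := by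
  have := ((hasFDerivAt_id x).norm_sq.mul_const (-1 / 2 : ℝ)).exp
  convert this using 1
  · ext y
    simp only [id]
    ring_nf
  · ext v
    simp only [neg_smul, neg_apply, smul_apply, coe_innerSL_apply, smul_eq_mul, id_eq,
      ContinuousLinearMap.comp_id, nsmul_eq_mul, Nat.cast_ofNat]
    ring_nf

variable [CompleteSpace F] {u : F → ℝ}

theorem norm_fderiv_eq_norm_gradient (x : F) : ‖fderiv ℝ u x‖ = ‖gradient u x‖ :=
  ((InnerProductSpace.toDual ℝ F).symm.norm_map _).symm

theorem ContDiff.gradient {k : WithTop ℕ∞} (hu : ContDiff ℝ (k + 1) u) :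
    ContDiff ℝ k (gradient u) :=
  (InnerProductSpace.toDual ℝ F).symm.toContinuousLinearEquiv.contDiff.comp
    (hu.fderiv_right le_rfl)

theorem fderiv_eq_zero_of_gradient_eq_zero {x : F} (h : gradient u x = 0) :
    fderiv ℝ u x = 0 := by
  rw [← toDual_gradient, h, map_zero]

theorem abs_sub_le_of_norm_gradient_le {C : ℝ} (hu : Differentiable ℝ u)
    (h : ∀ x, ‖gradient u x‖ ≤ C) (x y : F) : |u y - u x| ≤ C * ‖y - x‖ := by
  simpa [← Real.norm_eq_abs, norm_fderiv_eq_norm_gradient] using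
    convex_univ.norm_image_sub_le_of_norm_fderiv_le (fun z _ => hu z)
      (fun z _ => (norm_fderiv_eq_norm_gradient z).trans_le (h z)) (mem_univ x) (mem_univ y)

end InnerProductSpace

section Cube
variable {ι : Type*} [Fintype ι]

theorem EuclideanSpace.abs_apply_le_norm (x : EuclideanSpace ℝ ι) (i : ι) : |x i| ≤ ‖x‖ := by
  simpa using PiLp.norm_apply_le x i

theorem EuclideanSpace.norm_le_sqrt_card_mul {x : EuclideanSpace ℝ ι} {R : ℝ} (hR : 0 ≤ R)
    (hx : ∀ i, |x i| ≤ R) : ‖x‖ ≤ √(Fintype.card ι) * R := by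
  rw [EuclideanSpace.norm_eq, ← sqrt_sq hR, ← sqrt_mul (Nat.cast_nonneg _)]
  refine sqrt_le_sqrt ?_
  calc ∑ i, ‖x i‖ ^ 2 ≤ ∑ _i : ι, R ^ 2 := Finset.sum_le_sum fun i _ => by
        simpa using sq_le_sq' (abs_le.1 (hx i)).1 (abs_le.1 (hx i)).2
    _ = Fintype.card ι * R ^ 2 := by simp

theorem abs_setIntegral_cube_le {f : (ι → ℝ) → ℝ} {R M : ℝ} (hR : 0 ≤ R)
    (hf : ∀ x ∈ Icc (fun _ => -R) (fun _ => R), |f x| ≤ M) :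
    |∫ x in Icc (fun _ => -R) (fun _ => R), f x| ≤ M * (2 * R) ^ Fintype.card ι := by
  have hvol : volume.real (Icc (fun _ : ι => -R) (fun _ => R)) = (2 * R) ^ Fintype.card ι := by
    rw [measureReal_def, Real.volume_Icc_pi_toReal fun _ => by linarith]
    simp [two_mul]
  simpa [hvol] using norm_setIntegral_le_of_norm_le_const (μ := volume) isCompact_Icc.measure_lt_top
    fun x hx => (Real.norm_eq_abs _).trans_le (hf x hx)

theorem eq_zero_of_tendsto_setIntegral_cube {g : (ι → ℝ) → ℝ} (hg : Continuous g) (hg0 : 0 ≤ g)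
    (h : Tendsto (fun R => ∫ y in Icc (fun _ => -R) (fun _ => R), g y) atTop (𝓝 0)) : g = 0 := by
  by_contra hne
  obtain ⟨x₀, hx₀⟩ := Function.ne_iff.1 hne
  set R₀ := ‖x₀‖ + 1
  have hball : Metric.ball 0 R₀ ⊆ Icc (fun _ : ι => -R₀) (fun _ => R₀) := fun y hy => by
    have hy (j : ι) := abs_le.1 ((Real.norm_eq_abs _).symm.trans_le
      ((norm_le_pi_norm y j).trans (mem_ball_zero_iff.1 hy).le))
    exact ⟨fun j => (hy j).1, fun j => (hy j).2⟩
  have hpos : 0 < ∫ y in Icc (fun _ => -R₀) (fun _ => R₀), g y := by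
    rw [setIntegral_pos_iff_support_of_nonneg_ae (ae_of_all _ hg0) hg.integrableOn_Icc]
    exact ((hg.isOpen_support.inter Metric.isOpen_ball).measure_pos volume
      ⟨x₀, hx₀, by simp [R₀]⟩).trans_le (measure_mono (inter_subset_inter_right _ hball))
  have hmono : ∀ᶠ R in atTop, ∫ y in Icc (fun _ => -R₀) (fun _ => R₀), g y ≤
      ∫ y in Icc (fun _ => -R) (fun _ => R), g y := by
    filter_upwards [eventually_ge_atTop R₀] with R hR
    exact setIntegral_mono_set hg.integrableOn_Icc (ae_of_all _ hg0)
      (Icc_subset_Icc (fun _ => neg_le_neg hR) fun _ => hR).eventuallyLE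
  linarith [ge_of_tendsto h hmono]

end Cube

section Divergence
variable {n : ℕ}

theorem ediv_smul {φ : EuclideanSpace ℝ (Fin n) → ℝ}
    {G : EuclideanSpace ℝ (Fin n) → EuclideanSpace ℝ (Fin n)} {x : EuclideanSpace ℝ (Fin n)}
    (hφ : DifferentiableAt ℝ φ x) (hG : DifferentiableAt ℝ G x) :
    ediv (fun y => φ y • G y) x = φ x * ediv G x + fderiv ℝ φ x (G x) := by
  have hGi (i : Fin n) : DifferentiableAt ℝ (fun y => G y i) x :=
    (EuclideanSpace.proj (𝕜 := ℝ) i).differentiableAt.comp x hG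
  have hG_sum : G x = ∑ i, G x i • EuclideanSpace.single i (1 : ℝ) := by
    simpa using ((EuclideanSpace.basisFun (Fin n) ℝ).sum_repr (G x)).symm
  conv_rhs => rw [hG_sum]
  simp only [ediv, PiLp.smul_apply, smul_eq_mul, fderiv_fun_mul hφ (hGi _), map_sum, map_smul,
    Finset.mul_sum, ← Finset.sum_add_distrib, add_apply, smul_apply]

-- Divergence theorem on `[-R, R]ᵐ⁺¹`: each of the `2(m + 1)` faces has area `(2R)ᵐ`.
theorem integral_ediv_cube_le {m : ℕ}
    {F : EuclideanSpace ℝ (Fin (m + 1)) → EuclideanSpace ℝ (Fin (m + 1))}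
    (hF : Differentiable ℝ F) (hdiv : Continuous (ediv F)) {R M : ℝ} (hR : 0 ≤ R)
    (hM : ∀ y : EuclideanSpace ℝ (Fin (m + 1)), (∀ j, |y j| ≤ R) → (∃ i, |y i| = R) → ‖F y‖ ≤ M) :
    ∫ y in Icc (fun _ => -R) (fun _ => R), ediv F (WithLp.toLp 2 y) ≤
      2 * (m + 1) * (M * (2 * R) ^ m) := by
  let e := (EuclideanSpace.equiv (Fin (m + 1)) ℝ).symm
  have hFi (i : Fin (m + 1)) : Differentiable ℝ (fun y => F y i) :=
    (EuclideanSpace.proj (𝕜 := ℝ) i).differentiable.comp hF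
  have hface (i : Fin (m + 1)) (r : ℝ) (hr : |r| = R) :
      |∫ x in Icc (fun _ => -R) (fun _ => R), F (e (Fin.insertNth i r x)) i| ≤
        M * (2 * R) ^ m := by
    refine (abs_setIntegral_cube_le hR fun x hx => ?_).trans_eq (by rw [Fintype.card_fin])
    have hmem := (Fin.insertNth_mem_Icc (i := i) (q₁ := fun _ => -R) (q₂ := fun _ => R)).2
      ⟨abs_le.1 hr.le, hx⟩
    calc |F (e (Fin.insertNth i r x)) i| ≤ ‖F (e (Fin.insertNth i r x))‖ :=
          EuclideanSpace.abs_apply_le_norm _ i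
      _ ≤ M := hM _ (fun j => abs_le.2 ⟨hmem.1 j, hmem.2 j⟩) ⟨i, by simpa [e] using hr⟩
  have hdt := integral_divergence_of_hasFDerivAt_off_countable' (fun _ => -R) (fun _ => R)
    (fun _ => by linarith) (fun i y => F (e y) i)
    (fun i y => (fderiv ℝ (fun z => F z i) (e y)).comp (e : (Fin (m + 1) → ℝ) →L[ℝ] _)) ∅
    countable_empty (fun i => ((hFi i).continuous.comp e.continuous).continuousOn)
    (fun y _ i => ((hFi i) (e y)).hasFDerivAt.comp y e.hasFDerivAt)
    (hdiv.comp e.continuous).integrableOn_Icc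
  have hsum (y : Fin (m + 1) → ℝ) :
      ∑ i, (fderiv ℝ (fun z => F z i) (e y)).comp (e : (Fin (m + 1) → ℝ) →L[ℝ] _) (Pi.single i 1)
        = ediv F (e y) := by
    simp [ediv, e, PiLp.toLp_single]
  simp only [hsum] at hdt
  change ∫ y in _, ediv F (e y) ≤ _
  rw [hdt]
  calc _ ≤ ∑ _i : Fin (m + 1), 2 * (M * (2 * R) ^ m) := Finset.sum_le_sum fun i _ => by
        have hfront := hface i R (abs_of_nonneg hR)
        have hback := hface i (-R) (by rw [abs_neg, abs_of_nonneg hR])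
        simpa only [Function.comp_def, two_mul] using
          (le_abs_self _).trans ((abs_sub _ _).trans (add_le_add hfront hback))
    _ = 2 * (m + 1) * (M * (2 * R) ^ m) := by
        simp only [Finset.sum_const, Finset.card_univ, Fintype.card_fin, nsmul_eq_mul, Nat.cast_add,
          Nat.cast_one]
        ring

end Divergence

theorem tendsto_pow_mul_exp_neg_sq_div_two_atTop (k : ℕ) :
    Tendsto (fun R : ℝ => R ^ k * exp (-R ^ 2 / 2)) atTop (𝓝 0) := by
  refine ((tendsto_rpow_abs_mul_exp_neg_mul_sq_cocompact one_half_pos k).mono_left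
    atTop_le_cocompact).congr' ?_
  filter_upwards [eventually_ge_atTop 0] with R hR
  rw [rpow_natCast, abs_of_nonneg hR]
  ring_nf

theorem tendsto_cube_flux_bound (m : ℕ) (A B K : ℝ) :
    Tendsto (fun R : ℝ => 2 * (m + 1) * (exp (-R ^ 2 / 2) * (A + B * R) * K * (2 * R) ^ m))
      atTop (𝓝 0) := by
  have h := ((tendsto_pow_mul_exp_neg_sq_div_two_atTop m).const_mul
    (2 * (m + 1) * K * 2 ^ m * A)).add ((tendsto_pow_mul_exp_neg_sq_div_two_atTop (m + 1)).const_mul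
      (2 * (m + 1) * K * 2 ^ m * B))
  simp only [mul_zero, add_zero] at h
  exact h.congr fun R => by ring

section FMaximal
variable {n : ℕ} {u : EuclideanSpace ℝ (Fin n) → ℝ}

-- Its divergence is `n` times the mean curvature of the graph of `u` in Minkowski space.
noncomputable def meanCurvatureField (u : EuclideanSpace ℝ (Fin n) → ℝ) :
    EuclideanSpace ℝ (Fin n) → EuclideanSpace ℝ (Fin n) :=
  fun y => (√(1 - ‖gradient u y‖ ^ 2))⁻¹ • gradient u y

def IsFMaximalGraph (u : EuclideanSpace ℝ (Fin n) → ℝ) : Prop :=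
  ∀ x, ediv (meanCurvatureField u) x = ⟪x, gradient u x⟫ / √(1 - ‖gradient u x‖ ^ 2)

theorem isFMaximalGraph_const (c : ℝ) : IsFMaximalGraph (fun _ : EuclideanSpace ℝ (Fin n) => c) := by
  simp [IsFMaximalGraph, meanCurvatureField, ediv, gradient_fun_const]

theorem differentiableAt_meanCurvatureField (hu : ContDiff ℝ 2 u) {x : EuclideanSpace ℝ (Fin n)}
    (hx : ‖gradient u x‖ < 1) : DifferentiableAt ℝ (meanCurvatureField u) x := by
  have hgrad : Differentiable ℝ (gradient u) := (hu.gradient (k := 1)).differentiable one_ne_zero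
  exact ((((differentiableAt_const 1).sub ((hgrad x).norm_sq ℝ)).sqrt
    (one_sub_norm_sq_pos hx).ne').inv (sqrt_pos.2 (one_sub_norm_sq_pos hx)).ne').smul (hgrad x)

theorem norm_meanCurvatureField_le {c : ℝ} (hc : c < 1) {y : EuclideanSpace ℝ (Fin n)}
    (hy : ‖gradient u y‖ ≤ c) : ‖meanCurvatureField u y‖ ≤ (√(1 - c ^ 2))⁻¹ := by
  have h0 := norm_nonneg (gradient u y)
  have hpos : 0 < 1 - c ^ 2 := by nlinarith
  rw [meanCurvatureField, norm_smul, norm_inv, norm_of_nonneg (sqrt_nonneg _)]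
  calc (√(1 - ‖gradient u y‖ ^ 2))⁻¹ * ‖gradient u y‖ ≤ (√(1 - c ^ 2))⁻¹ * 1 := by
        gcongr
        linarith
    _ = _ := mul_one _

theorem ediv_gaussian_mul_smul_meanCurvatureField (hu : ContDiff ℝ 2 u)
    (hmax : IsFMaximalGraph u) {x : EuclideanSpace ℝ (Fin n)} (hx : ‖gradient u x‖ < 1) :
    ediv (fun y => (exp (-‖y‖ ^ 2 / 2) * u y) • meanCurvatureField u y) x =
      exp (-‖x‖ ^ 2 / 2) * ‖gradient u x‖ ^ 2 / √(1 - ‖gradient u x‖ ^ 2) := by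
  have hud : DifferentiableAt ℝ u x := hu.differentiable (by norm_num) x
  have hweight := (hasFDerivAt_exp_neg_norm_sq_div_two x).fun_mul hud.hasFDerivAt
  have hw : 0 < √(1 - ‖gradient u x‖ ^ 2) := sqrt_pos.2 (one_sub_norm_sq_pos hx)
  rw [ediv_smul hweight.differentiableAt (differentiableAt_meanCurvatureField hu hx), hmax x,
    hweight.fderiv]
  simp only [meanCurvatureField, add_apply, smul_apply, map_smul, innerSL_apply_apply,
    ← inner_gradient_left, real_inner_self_eq_norm_sq, smul_eq_mul]
  field_simp
  ring

theorem norm_gaussian_mul_smul_meanCurvatureField_le (hu : Differentiable ℝ u) {c : ℝ} (hc : c < 1)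
    (hgrad : ∀ x, ‖gradient u x‖ ≤ c) {R : ℝ} (hR : 0 ≤ R) {y : EuclideanSpace ℝ (Fin n)}
    (hy : ∀ j, |y j| ≤ R) (hyi : ∃ i, |y i| = R) :
    ‖(exp (-‖y‖ ^ 2 / 2) * u y) • meanCurvatureField u y‖ ≤
      exp (-R ^ 2 / 2) * (|u 0| + √n * R) * (√(1 - c ^ 2))⁻¹ := by
  obtain ⟨i, hi⟩ := hyi
  have hRy : R ≤ ‖y‖ := hi ▸ EuclideanSpace.abs_apply_le_norm y i
  have hgauss : exp (-‖y‖ ^ 2 / 2) ≤ exp (-R ^ 2 / 2) := exp_le_exp.2 (by nlinarith)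
  have hgrowth : |u y| ≤ |u 0| + √n * R := by
    have hlip := abs_sub_le_of_norm_gradient_le hu (fun x => (hgrad x).trans hc.le) 0 y
    have hnorm := EuclideanSpace.norm_le_sqrt_card_mul hR hy
    rw [Fintype.card_fin] at hnorm
    rw [one_mul, sub_zero] at hlip
    linarith [abs_sub_abs_le_abs_sub (u y) (u 0)]
  rw [norm_smul, norm_mul, norm_of_nonneg (exp_pos _).le, Real.norm_eq_abs]
  gcongr
  exact norm_meanCurvatureField_le hc (hgrad y)

theorem gradient_eq_zero_of_isFMaximalGraph (hu : ContDiff ℝ 2 u) {ε : ℝ} (hε : 0 < ε)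
    (hgrad : ∀ x, ‖gradient u x‖ ≤ 1 - ε) (hmax : IsFMaximalGraph u)
    (x : EuclideanSpace ℝ (Fin n)) : gradient u x = 0 := by
  obtain _ | m := n
  · exact Subsingleton.elim _ _
  have hlt (y : EuclideanSpace ℝ (Fin (m + 1))) : ‖gradient u y‖ < 1 := by linarith [hgrad y]
  set g : EuclideanSpace ℝ (Fin (m + 1)) → ℝ :=
    fun y => exp (-‖y‖ ^ 2 / 2) * ‖gradient u y‖ ^ 2 / √(1 - ‖gradient u y‖ ^ 2)
  have hdiv : ediv (fun y => (exp (-‖y‖ ^ 2 / 2) * u y) • meanCurvatureField u y) = g :=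
    funext fun y => ediv_gaussian_mul_smul_meanCurvatureField hu hmax (hlt y)
  have hg : Continuous g := by
    have := (hu.gradient (k := 1)).continuous
    exact Continuous.div (by fun_prop) (by fun_prop) fun y =>
      (sqrt_pos.2 (one_sub_norm_sq_pos (hlt y))).ne'
  have hg0 : 0 ≤ g := fun y => by positivity
  have hud : Differentiable ℝ u := hu.differentiable (by norm_num)
  have hflux : ∀ᶠ R in atTop, ∫ y in Icc (fun _ => -R) (fun _ => R), g (WithLp.toLp 2 y) ≤
      2 * (m + 1) * (exp (-R ^ 2 / 2) * (|u 0| + √(m + 1 : ℕ) * R) *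
        (√(1 - (1 - ε) ^ 2))⁻¹ * (2 * R) ^ m) := by
    filter_upwards [eventually_ge_atTop 0] with R hR
    rw [← hdiv]
    refine integral_ediv_cube_le (fun y => ?_) (hdiv ▸ hg) hR fun y hy hyi =>
      norm_gaussian_mul_smul_meanCurvatureField_le hud (by linarith) hgrad hR hy hyi
    exact ((hasFDerivAt_exp_neg_norm_sq_div_two y).differentiableAt.mul (hud y)).smul
      (differentiableAt_meanCurvatureField hu (hlt y))
  have hlim := eq_zero_of_tendsto_setIntegral_cube (hg.comp (PiLp.continuous_toLp 2 _))
    (fun y => hg0 _) (squeeze_zero' (Eventually.of_forall fun R =>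
      setIntegral_nonneg measurableSet_Icc fun y _ => hg0 _) hflux (tendsto_cube_flux_bound m _ _ _))
  have hgx : g x = 0 := congrFun hlim (WithLp.ofLp x)
  simpa [g, (exp_pos _).ne', (sqrt_pos.2 (one_sub_norm_sq_pos (hlt x))).ne'] using hgx

end FMaximal

theorem entire_f_maximal_graph_iff_const_general (n : ℕ)
    (u : EuclideanSpace ℝ (Fin n) → ℝ) (hu : ContDiff ℝ 2 u)
    (ε : ℝ) (hε : 0 < ε) (hgrad : ∀ x, ‖gradient u x‖ ≤ 1 - ε) :
    (∀ x, ediv (fun y => (Real.sqrt (1 - ‖gradient u y‖ ^ 2))⁻¹ • gradient u y) x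
        = ⟪x, gradient u x⟫ / Real.sqrt (1 - ‖gradient u x‖ ^ 2)) ↔
      ∃ c : ℝ, ∀ x, u x = c := by
  change IsFMaximalGraph u ↔ _
  refine ⟨fun hmax => ⟨u 0, fun x => ?_⟩, ?_⟩
  · have hfderiv (y : EuclideanSpace ℝ (Fin n)) : fderiv ℝ u y = 0 :=
      fderiv_eq_zero_of_gradient_eq_zero (gradient_eq_zero_of_isFMaximalGraph hu hε hgrad hmax y)
    exact is_const_of_fderiv_eq_zero (hu.differentiable (by norm_num)) hfderiv x 0
  · rintro ⟨c, hc⟩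
    obtain rfl : u = fun _ => c := funext hc
    exact isFMaximalGraph_const c

/-- A `C²` entire graph over Gauss space `𝔾ⁿ`, with gradient bounded away from `1`,
is `f`-maximal if and only if the defining function is constant. -/
theorem entire_f_maximal_graph_iff_const (n : ℕ) (hn : 1 ≤ n)
    (u : EuclideanSpace ℝ (Fin n) → ℝ) (hu : ContDiff ℝ 2 u)
    (ε : ℝ) (hε : 0 < ε) (hgrad : ∀ x, ‖gradient u x‖ ≤ 1 - ε) :
    (∀ x, ediv (fun y => (Real.sqrt (1 - ‖gradient u y‖ ^ 2))⁻¹ • gradient u y) x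
        = ⟪x, gradient u x⟫ / Real.sqrt (1 - ‖gradient u x‖ ^ 2)) ↔
      ∃ c : ℝ, ∀ x, u x = c :=
  entire_f_maximal_graph_iff_const_general n u hu ε hε hgrad
end

section
/- Let n ≥ 1 and define u : ℝⁿ → ℝ by u(x) = ∫₀^{x₁} √(e^{τ²}/(1 + e^{τ²})) dτ, where x = (x₁, …, xₙ). Then for every x ∈ ℝⁿ, the gradient of u satisfies 1 − |∇u(x)|² = 1/(1 + e^{x₁²}); in particular 0 < 1 − |∇u(x)|², so the graph of u in ℝ^{n+1} with the Lorentzian metric dx₁² + … + dxₙ² − dx_{n+1}² is spacelike. -/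
open Real

namespace EuclideanSpace

variable {ι : Type*} [Fintype ι] [DecidableEq ι]

theorem hasGradientAt_comp_apply {g : ℝ → ℝ} {c : ℝ} {x : EuclideanSpace ℝ ι} (i : ι)
    (hg : HasDerivAt g c (x i)) :
    HasGradientAt (fun y : EuclideanSpace ℝ ι => g (y i)) (c • single i 1) x := by
  rw [hasGradientAt_iff_hasFDerivAt]
  refine (hg.comp_hasFDerivAt x (proj i : EuclideanSpace ℝ ι →L[ℝ] ℝ).hasFDerivAt).congr_fderiv ?_
  ext w
  simp [inner_single_left]

theorem norm_gradient_integral_comp_apply {f : ℝ → ℝ} (hf : Continuous f) (a : ℝ) (i : ι)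
    (x : EuclideanSpace ℝ ι) :
    ‖gradient (fun y : EuclideanSpace ℝ ι => ∫ τ in a..y i, f τ) x‖ = |f (x i)| := by
  have hFTC := (hf.integral_hasStrictDerivAt a (x i)).hasDerivAt
  rw [(hasGradientAt_comp_apply i hFTC).gradient, norm_smul, PiLp.norm_single]
  simp

end EuclideanSpace

theorem one_sub_sqrt_div_one_add_sq {a : ℝ} (ha : 0 ≤ a) :
    1 - sqrt (a / (1 + a)) ^ 2 = 1 / (1 + a) := by
  rw [sq_sqrt (by positivity)]
  field_simp
  ring

/-- For `u(x) = ∫₀^{x₁} √(e^{τ²}/(1+e^{τ²})) dτ` on `ℝⁿ`, one has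
`1 - |∇u(x)|² = 1/(1 + e^{x₁²}) > 0`, so the graph of `u` is spacelike. -/
theorem example_graph_spacelike (n : ℕ) (hn : 0 < n)
    (u : EuclideanSpace ℝ (Fin n) → ℝ)
    (hu : ∀ x, u x = ∫ τ in (0 : ℝ)..(x ⟨0, hn⟩),
        Real.sqrt (Real.exp (τ ^ 2) / (1 + Real.exp (τ ^ 2)))) :
    ∀ x, 1 - ‖gradient u x‖ ^ 2 = 1 / (1 + Real.exp ((x ⟨0, hn⟩) ^ 2)) ∧
      0 < 1 - ‖gradient u x‖ ^ 2 := by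
  intro x
  have hcont : Continuous fun τ : ℝ => sqrt (exp (τ ^ 2) / (1 + exp (τ ^ 2))) := by
    fun_prop (disch := intro; positivity)
  have key : 1 - ‖gradient u x‖ ^ 2 = 1 / (1 + exp (x ⟨0, hn⟩ ^ 2)) := by
    rw [funext hu, EuclideanSpace.norm_gradient_integral_comp_apply hcont, sq_abs,
      one_sub_sqrt_div_one_add_sq (exp_pos _).le]
  exact ⟨key, key ▸ by positivity⟩
end

section
/- Let n ≥ 1 and define u : ℝⁿ → ℝ by u(x) = ∫₀^{x₁} √(e^{τ²}/(1 + e^{τ²})) dτ, where x = (x₁, …, xₙ). Then u satisfies the f-maximal graph equation: for every x ∈ ℝⁿ, div(∇u/√(1 − |∇u|²))(x) − ⟨x, ∇u(x)⟩/√(1 − |∇u(x)|²) = 0. Hence the entire graph Σ₀ of u is a non-planar entire f-maximal graph in 𝔾ⁿ × ℝ₁. -/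
open scoped RealInnerProductSpace

noncomputable def fMaximalOperator {n : ℕ} (u : EuclideanSpace ℝ (Fin n) → ℝ)
    (x : EuclideanSpace ℝ (Fin n)) : ℝ :=
  ediv (fun y => (Real.sqrt (1 - ‖gradient u y‖ ^ 2))⁻¹ • gradient u y) x
    - ⟪x, gradient u x⟫ / Real.sqrt (1 - ‖gradient u x‖ ^ 2)

section OneCoordinate

variable {n : ℕ} (i : Fin n) {x : EuclideanSpace ℝ (Fin n)}

theorem hasGradientAt_comp_apply {G : ℝ → ℝ} {G' : ℝ} (hG : HasDerivAt G G' (x i)) :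
    HasGradientAt (fun y : EuclideanSpace ℝ (Fin n) => G (y i))
      (EuclideanSpace.single i G') x := by
  have hdual : InnerProductSpace.toDual ℝ _ (EuclideanSpace.single i G')
      = G' • EuclideanSpace.proj (𝕜 := ℝ) (ι := Fin n) i := by
    ext y
    simp [EuclideanSpace.inner_single_left]
  rw [hasGradientAt_iff_hasFDerivAt, hdual]
  exact hG.comp_hasFDerivAt x (EuclideanSpace.proj (𝕜 := ℝ) i).hasFDerivAt

theorem ediv_single_comp_apply {φ : ℝ → ℝ} {φ' : ℝ} (hφ : HasDerivAt φ φ' (x i)) :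
    ediv (fun y => EuclideanSpace.single i (φ (y i))) x = φ' := by
  rw [ediv, Finset.sum_eq_single i]
  · simp only [PiLp.single_eq_same]
    rw [(hasGradientAt_comp_apply i hφ).hasFDerivAt.fderiv, InnerProductSpace.toDual_apply_apply,
      EuclideanSpace.inner_single_right]
    simp
  · intro j _ hj
    simp [hj]
  · simp

theorem fMaximalOperator_comp_apply {G g ψ : ℝ → ℝ} {ψ' : ℝ}
    (hG : ∀ t, HasDerivAt G (g t) t) (hψ : ∀ t, (Real.sqrt (1 - g t ^ 2))⁻¹ * g t = ψ t)
    (hψ' : HasDerivAt ψ ψ' (x i)) :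
    fMaximalOperator (fun y => G (y i)) x = ψ' - x i * ψ (x i) := by
  set u := fun y : EuclideanSpace ℝ (Fin n) => G (y i)
  have hgrad : ∀ y, gradient u y = EuclideanSpace.single i (g (y i)) :=
    fun y => (hasGradientAt_comp_apply i (hG (y i))).gradient
  have hnorm : ∀ y, ‖gradient u y‖ ^ 2 = g (y i) ^ 2 := by
    intro y
    rw [hgrad, PiLp.norm_single, Real.norm_eq_abs, sq_abs]
  have hfield : (fun y => (Real.sqrt (1 - ‖gradient u y‖ ^ 2))⁻¹ • gradient u y)
      = fun y => EuclideanSpace.single i (ψ (y i)) := by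
    ext y j
    rw [hnorm, PiLp.smul_apply, hgrad, PiLp.single_apply, PiLp.single_apply]
    split_ifs <;> simp [hψ]
  rw [fMaximalOperator, hfield, ediv_single_comp_apply i hψ', hnorm, hgrad,
    EuclideanSpace.inner_single_right, conj_trivial, ← hψ]
  ring

end OneCoordinate

theorem inv_sqrt_one_sub_sq_mul_sqrt_div_one_add {a : ℝ} (ha : 0 ≤ a) :
    (Real.sqrt (1 - Real.sqrt (a / (1 + a)) ^ 2))⁻¹ * Real.sqrt (a / (1 + a)) = Real.sqrt a := by
  have h1a : 0 < 1 + a := by linarith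
  have hsub : 1 - Real.sqrt (a / (1 + a)) ^ 2 = (1 + a)⁻¹ := by
    rw [Real.sq_sqrt (by positivity)]
    field_simp
    ring
  rw [hsub, Real.sqrt_inv, inv_inv, ← Real.sqrt_mul h1a.le, mul_div_cancel₀ _ h1a.ne']

theorem hasDerivAt_exp_sq_div_two (t : ℝ) :
    HasDerivAt (fun s => Real.exp (s ^ 2 / 2)) (t * Real.exp (t ^ 2 / 2)) t := by
  have h : HasDerivAt (fun s : ℝ => s ^ 2 / 2) t t := by
    simpa using (hasDerivAt_pow 2 t).div_const 2
  simpa [mul_comm] using h.exp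

theorem gradient_inner_add_const {E : Type*} [NormedAddCommGroup E] [InnerProductSpace ℝ E]
    [CompleteSpace E] (a : E) (b : ℝ) (x : E) : gradient (fun y => ⟪a, y⟫ + b) x = a := by
  refine (hasGradientAt_iff_hasFDerivAt.mpr ?_).gradient
  exact ((innerSL ℝ a).hasFDerivAt).add_const b

/-- The function `u(x) = ∫₀^{x₁} √(e^{τ²}/(1+e^{τ²})) dτ` satisfies the `f`-maximal
graph equation in `𝔾ⁿ × ℝ₁`, and its entire graph is non-planar (u is not affine). -/
theorem example_entire_f_maximal_nonplanar (n : ℕ) (hn : 0 < n)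
    (u : EuclideanSpace ℝ (Fin n) → ℝ)
    (hu : ∀ x, u x = ∫ τ in (0 : ℝ)..(x ⟨0, hn⟩),
        Real.sqrt (Real.exp (τ ^ 2) / (1 + Real.exp (τ ^ 2)))) :
    (∀ x, ediv (fun y => (Real.sqrt (1 - ‖gradient u y‖ ^ 2))⁻¹ • gradient u y) x
        - ⟪x, gradient u x⟫ / Real.sqrt (1 - ‖gradient u x‖ ^ 2) = 0) ∧
      ¬ ∃ (a : EuclideanSpace ℝ (Fin n)) (b : ℝ), ∀ x, u x = ⟪a, x⟫ + b := by
  set i : Fin n := ⟨0, hn⟩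
  set g : ℝ → ℝ := fun τ => Real.sqrt (Real.exp (τ ^ 2) / (1 + Real.exp (τ ^ 2)))
  have hg : Continuous g := by
    simp only [g]
    fun_prop (disch := exact fun _ => by positivity)
  have hG (t : ℝ) : HasDerivAt (fun s => ∫ τ in (0 : ℝ)..s, g τ) (g t) t :=
    (hg.integral_hasStrictDerivAt 0 t).hasDerivAt
  obtain rfl : u = fun y => ∫ τ in (0 : ℝ)..(y i), g τ := funext hu
  refine ⟨fun x => ?_, ?_⟩
  · have hψ (t : ℝ) : (Real.sqrt (1 - g t ^ 2))⁻¹ * g t = Real.exp (t ^ 2 / 2) := by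
      rw [inv_sqrt_one_sub_sq_mul_sqrt_div_one_add (Real.exp_pos _).le, Real.exp_half]
    rw [← fMaximalOperator, fMaximalOperator_comp_apply i hG hψ (hasDerivAt_exp_sq_div_two _)]
    ring
  · rintro ⟨a, b, hab⟩
    have hconst (t : ℝ) : g t = a i := by
      have hgrad : a = EuclideanSpace.single i (g t) := by
        simpa [funext hab, gradient_inner_add_const] using
          (hasGradientAt_comp_apply i (hG t) (x := EuclideanSpace.single i t)).gradient
      rw [hgrad, PiLp.single_eq_same]
    have h01 : g 0 < g 1 := by
      refine Real.sqrt_lt_sqrt (by positivity) ?_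
      rw [div_lt_div_iff₀ (by positivity) (by positivity)]
      norm_num
      linarith [Real.add_one_lt_exp (one_ne_zero' ℝ)]
    exact h01.ne (by rw [hconst, hconst])
end
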